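/- LFI3 is maximal with respect to LFI1: for every formula α such that ⊨_LFI1 α but ⊭_LFI3 α, the logic obtained from LFI3 by adding all substitution instances of α as theorems coincides with LFI1; that is, for all Γ and ψ, Γ ⊨_LFI1 ψ if and only if Γ ∪ {σ(α) : σ a substitution} ⊨_LFI3 ψ. -/

import Mathlib

/-- Formulas of the language with ¬, ∘, ∧, ∨, →. -/
inductive Fm : Type
  | atom : Nat → Fm
  | neg : Fm → Fm
  | circ : Fm → Fm
  | conj : Fm → Fm → Fm
  | disj : Fm → Fm → Fm
  | impl : Fm → Fm → Fm

/-- The five truth values of LFI3: T=(1,0,0), t=(1,0,1), b=(1,1,1), f=(0,1,1), F=(0,1,0). -/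
inductive V5 : Type
  | T | t | b | f | F
deriving DecidableEq

open V5

/-- Rank in the linear order F < f < b < t < T. -/
def rk : V5 → Nat
  | F => 0 | f => 1 | b => 2 | t => 3 | T => 4

/-- Infimum in the linear order F < f < b < t < T. -/
def min5 (x y : V5) : V5 := if rk x ≤ rk y then x else y

/-- Supremum in the linear order F < f < b < t < T. -/
def max5 (x y : V5) : V5 := if rk x ≤ rk y then y else x

/-- Negation: ¬(a₁,a₂,a₃) = (a₂,a₁,a₃). -/
def neg5 : V5 → V5
  | T => F | t => f | b => b | f => t | F => T

/-- Consistency: ∘(a₁,a₂,a₃) = (~(a₁∧a₂), a₃, a₃∧~(a₁∧a₂)). -/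
def circ5 : V5 → V5
  | T => T | t => b | b => F | f => b | F => T

/-- Strong negation ~a := ¬a ∧ ∘a. -/
def snd5 (x : V5) : V5 := min5 (neg5 x) (circ5 x)

/-- Implication a→b := ~a ∨ b. -/
def imp5 (x y : V5) : V5 := max5 (snd5 x) y

/-- Designated values: D = {T, t, b}. -/
def des (x : V5) : Prop := 2 ≤ rk x

/-- The valuation (homomorphism into the LFI3 algebra) extending an atom assignment. -/
def ev (v : Nat → V5) : Fm → V5
  | Fm.atom n => v n
  | Fm.neg a => neg5 (ev v a)
  | Fm.circ a => circ5 (ev v a)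
  | Fm.conj a c => min5 (ev v a) (ev v c)
  | Fm.disj a c => max5 (ev v a) (ev v c)
  | Fm.impl a c => imp5 (ev v a) (ev v c)

/-- Semantical consequence of LFI3. -/
def L3Cons (Γ : Set Fm) (ψ : Fm) : Prop :=
  ∀ v : Nat → V5, (∀ γ ∈ Γ, des (ev v γ)) → des (ev v ψ)

/-- Consequence of LFI1, given by the matrix on the subalgebra {T, b, F} of the
LFI3 algebra with designated values {T, b}. -/
def L1Cons (Γ : Set Fm) (ψ : Fm) : Prop :=
  ∀ v : Nat → V5, (∀ n, v n ∈ ({V5.T, V5.b, V5.F} : Set V5)) →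
    (∀ γ ∈ Γ, ev v γ ∈ ({V5.T, V5.b} : Set V5)) → ev v ψ ∈ ({V5.T, V5.b} : Set V5)

/-- Application of a substitution (a map from atoms to formulas) to a formula. -/
def subst (σ : Nat → Fm) : Fm → Fm
  | .atom n => σ n
  | .neg a => (subst σ a).neg
  | .circ a => (subst σ a).circ
  | .conj a c => (subst σ a).conj (subst σ c)
  | .disj a c => (subst σ a).disj (subst σ c)
  | .impl a c => (subst σ a).impl (subst σ c)

/-!
If some valuation `w` refutes `α`, then a valuation `v` designating every substitution instance
of `α` gives no formula the value `t`: from a formula `q` with value `t`, the unary terms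
`∘∘¬q, q, ∘q, ¬q, ∘∘q` take the values `T, t, b, f, F`, so substituting them according to `w`
yields an instance of `α` whose value is `ev w α`, which is undesignated. As `¬f = t`, the
value `f` is excluded too, so `v` lives in the LFI1 subalgebra `{T, b, F}`, on which the two
sets of designated values agree. Conversely, every LFI1 valuation designates all instances of
an LFI1-valid `α`, since substitution commutes with evaluation.
-/

instance : Fintype V5 :=
  ⟨{T, t, b, f, F}, by intro x; cases x <;> simp⟩

abbrev lfi1Vals : Set V5 := {T, b, F}

lemma neg5_mem_lfi1Vals : ∀ x ∈ lfi1Vals, neg5 x ∈ lfi1Vals := by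
  simp only [Set.mem_insert_iff, Set.mem_singleton_iff]
  decide

lemma circ5_mem_lfi1Vals : ∀ x ∈ lfi1Vals, circ5 x ∈ lfi1Vals := by
  simp only [Set.mem_insert_iff, Set.mem_singleton_iff]
  decide

lemma min5_mem_lfi1Vals : ∀ x ∈ lfi1Vals, ∀ y ∈ lfi1Vals, min5 x y ∈ lfi1Vals := by
  simp only [Set.mem_insert_iff, Set.mem_singleton_iff]
  decide

lemma max5_mem_lfi1Vals : ∀ x ∈ lfi1Vals, ∀ y ∈ lfi1Vals, max5 x y ∈ lfi1Vals := by
  simp only [Set.mem_insert_iff, Set.mem_singleton_iff]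
  decide

lemma imp5_mem_lfi1Vals : ∀ x ∈ lfi1Vals, ∀ y ∈ lfi1Vals, imp5 x y ∈ lfi1Vals := by
  simp only [Set.mem_insert_iff, Set.mem_singleton_iff]
  decide

lemma ev_mem_lfi1Vals {v : Nat → V5} (hv : ∀ n, v n ∈ lfi1Vals) (φ : Fm) :
    ev v φ ∈ lfi1Vals := by
  induction φ with
  | atom n => exact hv n
  | neg a ih => exact neg5_mem_lfi1Vals _ ih
  | circ a ih => exact circ5_mem_lfi1Vals _ ih
  | conj a c iha ihc => exact min5_mem_lfi1Vals _ iha _ ihc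
  | disj a c iha ihc => exact max5_mem_lfi1Vals _ iha _ ihc
  | impl a c iha ihc => exact imp5_mem_lfi1Vals _ iha _ ihc

lemma des_iff_mem_of_mem_lfi1Vals : ∀ x ∈ lfi1Vals, des x ↔ x ∈ ({T, b} : Set V5) := by
  simp only [des, Set.mem_insert_iff, Set.mem_singleton_iff]
  decide

lemma des_ev_iff {v : Nat → V5} (hv : ∀ n, v n ∈ lfi1Vals) (φ : Fm) :
    des (ev v φ) ↔ ev v φ ∈ ({T, b} : Set V5) :=
  des_iff_mem_of_mem_lfi1Vals _ (ev_mem_lfi1Vals hv φ)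

lemma ev_subst (v : Nat → V5) (σ : Nat → Fm) (φ : Fm) :
    ev v (subst σ φ) = ev (fun m => ev v (σ m)) φ := by
  induction φ with
  | atom n => rfl
  | neg a ih => simp only [subst, ev, ih]
  | circ a ih => simp only [subst, ev, ih]
  | conj a c iha ihc => simp only [subst, ev, iha, ihc]
  | disj a c iha ihc => simp only [subst, ev, iha, ihc]
  | impl a c iha ihc => simp only [subst, ev, iha, ihc]

lemma des_ev_subst_of_L1Cons {α : Fm} (hα : L1Cons ∅ α) {v : Nat → V5}
    (hv : ∀ n, v n ∈ lfi1Vals) (σ : Nat → Fm) : des (ev v (subst σ α)) := by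
  rw [ev_subst]
  have hσ : ∀ m, ev v (σ m) ∈ lfi1Vals := fun m => ev_mem_lfi1Vals hv (σ m)
  exact (des_ev_iff hσ α).2 (hα _ hσ (by simp))

def termOfVal (q : Fm) : V5 → Fm
  | T => q.circ.circ.neg
  | t => q
  | b => q.circ
  | f => q.neg
  | F => q.circ.circ

lemma ev_termOfVal {v : Nat → V5} {q : Fm} (hq : ev v q = t) (c : V5) :
    ev v (termOfVal q c) = c := by
  cases c <;> simp only [termOfVal, ev, hq] <;> rfl

lemma ev_ne_t_of_forall_des_subst {α : Fm} {w : Nat → V5} (hw : ¬ des (ev w α))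
    {v : Nat → V5} (hv : ∀ σ, des (ev v (subst σ α))) (q : Fm) : ev v q ≠ t := by
  intro hq
  have hval : (fun m => ev v (termOfVal q (w m))) = w :=
    funext fun m => ev_termOfVal hq (w m)
  exact hw (hval ▸ ev_subst v _ α ▸ hv fun m => termOfVal q (w m))

lemma mem_lfi1Vals_of_forall_des_subst {α : Fm} {w : Nat → V5} (hw : ¬ des (ev w α))
    {v : Nat → V5} (hv : ∀ σ, des (ev v (subst σ α))) (n : Nat) : v n ∈ lfi1Vals := by
  have hnt := ev_ne_t_of_forall_des_subst hw hv (.atom n)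
  have hnf := ev_ne_t_of_forall_des_subst hw hv (.neg (.atom n))
  simp only [ev] at hnt hnf
  cases hvn : v n <;> simp_all [neg5]

/-- LFI3 is maximal w.r.t. LFI1: if α is valid in LFI1 but not in LFI3, then
LFI3 plus all substitution instances of α coincides with LFI1. -/
theorem stmt10 (α : Fm) (h1 : L1Cons ∅ α) (h2 : ¬ L3Cons ∅ α) :
    ∀ (Γ : Set Fm) (ψ : Fm),
      L1Cons Γ ψ ↔ L3Cons (Γ ∪ {φ | ∃ σ : Nat → Fm, φ = subst σ α}) ψ := by
  intro Γ ψ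
  obtain ⟨w, hw⟩ : ∃ w : Nat → V5, ¬ des (ev w α) := by
    simpa [L3Cons] using h2
  constructor
  · intro hψ v hv
    have hS := mem_lfi1Vals_of_forall_des_subst hw fun σ => hv _ (Or.inr ⟨σ, rfl⟩)
    exact (des_ev_iff hS ψ).2 (hψ v hS fun γ hγ => (des_ev_iff hS γ).1 (hv γ (Or.inl hγ)))
  · intro hψ v hS hΓ
    refine (des_ev_iff hS ψ).1 (hψ v ?_)
    rintro γ (hγ | ⟨σ, rfl⟩)
    · exact (des_ev_iff hS γ).2 (hΓ γ hγ)
    · exact des_ev_subst_of_L1Cons h1 hS σ
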